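/- arXiv:2505.13727 — 5 statements merged into one kernel-verified Lean document; each statement's English description precedes it below -/
import Mathlib

section
/- Let g ≥ 1 be an integer and let τ be a symmetric g×g complex matrix whose imaginary part is positive definite. Then for all z1, z2 ∈ ℂ^g the Riemann theta relation holds: θ[0,0](z1 + z2, τ) · θ[0,0](z1 − z2, τ) = Σ_{a ∈ {0,1/2}^g} θ[a,0](2z1, 2τ) · θ[a,0](2z2, 2τ), where the sum runs over all 2^g vectors a with entries in {0, 1/2}. -/
open scoped BigOperators

/-- The theta function with characteristic `[a, b]`:
`θ[a,b](z,τ) = Σ_{n ∈ ℤ^g} exp(πi·(n+a)ᵀτ(n+a) + 2πi·(n+a)ᵀ(z+b))`. -/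
noncomputable def theta (g : ℕ) (τ : Matrix (Fin g) (Fin g) ℂ) (a b : Fin g → ℚ)
    (z : Fin g → ℂ) : ℂ :=
  ∑' n : Fin g → ℤ,
    Complex.exp ((Real.pi : ℂ) * Complex.I *
        dotProduct (fun i => (n i : ℂ) + (a i : ℂ))
          (τ.mulVec fun i => (n i : ℂ) + (a i : ℂ)) +
      2 * (Real.pi : ℂ) * Complex.I *
        dotProduct (fun i => (n i : ℂ) + (a i : ℂ)) fun i => z i + (b i : ℂ))

/-!
Write `n₁ = m + k + ε` and `n₂ = m - k` with `ε ∈ {0,1}^g`; this parametrises `ℤ^g × ℤ^g`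
bijectively, `ε` being the parity of `n₁ + n₂`. With `v = m + ε/2` and `w = k + ε/2` the
parallelogram law `(v+w)ᵀτ(v+w) + (v-w)ᵀτ(v-w) = 2vᵀτv + 2wᵀτw` (and its linear analogue for
the `z`-terms) turns the `(n₁, n₂)` term of the product on the left into the `(m, k)` term of the
`ε`-th product on the right. Positive definiteness of `Im τ` makes every series absolutely
convergent, which justifies multiplying and regrouping them.
-/

open Complex Matrix Metric Real

theorem exists_pos_mul_norm_sq_le_of_homogeneous {E : Type*} [NormedAddCommGroup E]
    [NormedSpace ℝ E] [ProperSpace E] {Q : E → ℝ} (hQ : Continuous Q)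
    (hsmul : ∀ (t : ℝ) x, Q (t • x) = t ^ 2 * Q x) (hpos : ∀ x ≠ 0, 0 < Q x) :
    ∃ c > 0, ∀ x, c * ‖x‖ ^ 2 ≤ Q x := by
  have hQ0 : Q 0 = 0 := by simpa using hsmul 0 0
  have hunit : ∀ x : E, x ≠ 0 → ‖x‖⁻¹ • x ∈ sphere (0 : E) 1 := fun x hx => by
    simp [norm_smul, hx]
  by_cases hE : (sphere (0 : E) 1).Nonempty
  · obtain ⟨u, hu, hmin⟩ := (isCompact_sphere (0 : E) 1).exists_isMinOn hE hQ.continuousOn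
    refine ⟨Q u, hpos u (ne_zero_of_mem_unit_sphere ⟨u, hu⟩), fun x => ?_⟩
    rcases eq_or_ne x 0 with rfl | hx
    · simp [hQ0]
    calc Q u * ‖x‖ ^ 2 ≤ Q (‖x‖⁻¹ • x) * ‖x‖ ^ 2 := by gcongr; exact hmin (hunit x hx)
      _ = Q x := by rw [hsmul]; field_simp
  · refine ⟨1, one_pos, fun x => ?_⟩
    obtain rfl : x = 0 := by_contra fun hx => hE ⟨_, hunit x hx⟩
    simp [hQ0]

theorem Matrix.PosDef.exists_pos_mul_sum_sq_le {ι : Type*} [Fintype ι] {Y : Matrix ι ι ℝ}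
    (hY : Y.PosDef) : ∃ c > 0, ∀ x : ι → ℝ, c * ∑ i, x i ^ 2 ≤ x ⬝ᵥ Y *ᵥ x := by
  obtain ⟨c, hc, hle⟩ := exists_pos_mul_norm_sq_le_of_homogeneous
    (E := EuclideanSpace ℝ ι) (Q := fun x => x.ofLp ⬝ᵥ Y *ᵥ x.ofLp) (by fun_prop)
    (fun t x => by
      simp only [WithLp.ofLp_smul, mulVec_smul, dotProduct_smul, smul_dotProduct, smul_eq_mul]
      ring)
    (fun x hx => hY.dotProduct_mulVec_pos (by simpa using hx))
  refine ⟨c, hc, fun x => ?_⟩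
  simpa [EuclideanSpace.norm_sq_eq] using hle (WithLp.toLp 2 x)

theorem summable_exp_neg_mul_sq_add_mul_abs {c : ℝ} (hc : 0 < c) {C : ℝ} (hC : 0 ≤ C) (t : ℝ) :
    Summable fun k : ℤ => rexp (-c * (k + t) ^ 2 + C * |k + t|) := by
  have hT : 0 < c / (2 * π) := by positivity
  refine ((summable_pow_mul_jacobiTheta₂_term_bound (C / (2 * π)) hT 0).mul_left
    (rexp (c * t ^ 2 + C * |t|))).of_nonneg_of_le (fun _ => (exp_pos _).le) fun k => ?_
  rw [pow_zero, one_mul, ← Real.exp_add, Real.exp_le_exp]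
  have hsq : (k : ℝ) ^ 2 / 2 - t ^ 2 ≤ (k + t) ^ 2 := by nlinarith [sq_nonneg ((k : ℝ) + 2 * t)]
  have habs : |(k : ℝ) + t| ≤ |(k : ℝ)| + |t| := abs_add_le _ _
  field_simp
  push_cast
  nlinarith [mul_le_mul_of_nonneg_left habs hC, pi_pos]

theorem summable_prod_apply_of_nonneg {ι κ : Type*} [Fintype ι] {f : ι → κ → ℝ}
    (hf0 : ∀ i k, 0 ≤ f i k) (hf : ∀ i, Summable (f i)) :
    Summable fun x : ι → κ => ∏ i, f i (x i) := by
  classical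
  refine summable_of_sum_le (c := ∏ i, ∑' k, f i k)
    (fun x => Finset.prod_nonneg fun i _ => hf0 i (x i)) fun s => ?_
  calc ∑ x ∈ s, ∏ i, f i (x i)
      ≤ ∑ x ∈ Fintype.piFinset fun i => s.image (· i), ∏ i, f i (x i) :=
        Finset.sum_le_sum_of_subset_of_nonneg
          (fun x hx => Fintype.mem_piFinset.mpr fun i => Finset.mem_image_of_mem _ hx)
          fun x _ _ => Finset.prod_nonneg fun i _ => hf0 i (x i)
    _ = ∏ i, ∑ k ∈ s.image (· i), f i k := (Finset.prod_univ_sum _ _).symm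
    _ ≤ ∏ i, ∑' k, f i k :=
        Finset.prod_le_prod (fun i _ => Finset.sum_nonneg fun k _ => hf0 i k)
          fun i _ => (hf i).sum_le_tsum _ fun k _ => hf0 i k

def parityEquiv (ι : Type*) : (ι → Bool) × (ι → ℤ) × (ι → ℤ) ≃ (ι → ℤ) × (ι → ℤ) where
  toFun x := (fun i => x.2.1 i + x.2.2 i + if x.1 i then 1 else 0, x.2.1 - x.2.2)
  invFun p := (fun i => (p.1 i + p.2 i) % 2 == 1, fun i => (p.1 i + p.2 i) / 2,
    fun i => (p.1 i + p.2 i) / 2 - p.2 i)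
  left_inv := by
    rintro ⟨ε, m, k⟩
    refine Prod.ext (funext fun i => ?_) (Prod.ext (funext fun i => ?_) (funext fun i => ?_)) <;>
      cases h : ε i <;> simp [h] <;> omega
  right_inv := by
    rintro ⟨p, q⟩
    refine Prod.ext (funext fun i => ?_) (funext fun i => ?_) <;>
      rcases Int.emod_two_eq_zero_or_one (p i + q i) with h | h <;> simp [h] <;> omega

section ThetaTerm

variable {ι : Type*} [Fintype ι]

noncomputable def thetaTerm (τ : Matrix ι ι ℂ) (x w : ι → ℂ) : ℂ :=
  cexp (π * I * (x ⬝ᵥ τ *ᵥ x) + 2 * π * I * (x ⬝ᵥ w))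

theorem norm_thetaTerm_ofReal (τ : Matrix ι ι ℂ) (x : ι → ℝ) (w : ι → ℂ) :
    ‖thetaTerm τ (fun i => (x i : ℂ)) w‖ =
      rexp (-π * (x ⬝ᵥ τ.map im *ᵥ x) - 2 * π * (x ⬝ᵥ fun i => (w i).im)) := by
  simp [thetaTerm, Complex.norm_exp, dotProduct, mulVec, Complex.re_sum, Finset.mul_sum, mul_re,
    mul_im]
  ring

theorem norm_thetaTerm_ofReal_le_prod {τ : Matrix ι ι ℂ} {c : ℝ}
    (hc : ∀ x : ι → ℝ, c * ∑ i, x i ^ 2 ≤ x ⬝ᵥ τ.map im *ᵥ x) (x : ι → ℝ) (w : ι → ℂ) :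
    ‖thetaTerm τ (fun i => (x i : ℂ)) w‖ ≤
      ∏ i, rexp (-(π * c) * x i ^ 2 + 2 * π * |(w i).im| * |x i|) := by
  have hlin : -(2 * π) * (x ⬝ᵥ fun i => (w i).im) ≤ ∑ i, 2 * π * |(w i).im| * |x i| := by
    rw [dotProduct, Finset.mul_sum]
    refine Finset.sum_le_sum fun i _ => ?_
    have := neg_abs_le (x i * (w i).im)
    rw [abs_mul] at this
    nlinarith [pi_pos]
  rw [norm_thetaTerm_ofReal, ← Real.exp_sum, Real.exp_le_exp, Finset.sum_add_distrib,
    ← Finset.mul_sum]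
  nlinarith [hc x, pi_pos]

theorem summable_norm_thetaTerm {τ : Matrix ι ι ℂ} (hτ : (τ.map im).PosDef) (a : ι → ℝ)
    (w : ι → ℂ) :
    Summable fun n : ι → ℤ => ‖thetaTerm τ (fun i => ((n i + a i : ℝ) : ℂ)) w‖ := by
  obtain ⟨c, hc, hle⟩ := hτ.exists_pos_mul_sum_sq_le
  refine (summable_prod_apply_of_nonneg (fun i k => (exp_pos _).le) fun i =>
    summable_exp_neg_mul_sq_add_mul_abs (c := π * c) (C := 2 * π * |(w i).im|)
      (by positivity) (by positivity) (a i)).of_nonneg_of_le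
    (fun n => norm_nonneg _) fun n => norm_thetaTerm_ofReal_le_prod hle _ w

theorem thetaTerm_two_smul_mul_thetaTerm (τ : Matrix ι ι ℂ) (v w z₁ z₂ : ι → ℂ) :
    thetaTerm (2 • τ) v (2 • z₁) * thetaTerm (2 • τ) w (2 • z₂) =
      thetaTerm τ (v + w) (z₁ + z₂) * thetaTerm τ (v - w) (z₁ - z₂) := by
  simp only [thetaTerm, ← Complex.exp_add, smul_mulVec, mulVec_add, mulVec_sub, dotProduct_smul,
    dotProduct_add, dotProduct_sub, add_dotProduct, sub_dotProduct]
  ring_nf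

theorem thetaTerm_parityEquiv (τ : Matrix ι ι ℂ) (z₁ z₂ : ι → ℂ) (ε : ι → Bool) (m k : ι → ℤ) :
    thetaTerm τ (fun i => ((parityEquiv ι (ε, m, k)).1 i : ℂ) + ((0 : ι → ℚ) i : ℂ)) (z₁ + z₂) *
        thetaTerm τ (fun i => ((parityEquiv ι (ε, m, k)).2 i : ℂ) + ((0 : ι → ℚ) i : ℂ))
          (z₁ - z₂) =
      thetaTerm (2 • τ) (fun i => (m i : ℂ) + ((if ε i then 1 / 2 else 0 : ℚ) : ℂ))
          (fun i => 2 * z₁ i) *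
        thetaTerm (2 • τ) (fun i => (k i : ℂ) + ((if ε i then 1 / 2 else 0 : ℚ) : ℂ))
          (fun i => 2 * z₂ i) := by
  have h2 : ∀ z : ι → ℂ, (fun i => 2 * z i) = 2 • z := fun z => by ext; simp
  rw [h2, h2, thetaTerm_two_smul_mul_thetaTerm]
  congr 2 <;> funext i <;> cases h : ε i <;> norm_num [parityEquiv, h, add_add_add_comm]

end ThetaTerm

theorem theta_eq_tsum_thetaTerm {g : ℕ} (τ : Matrix (Fin g) (Fin g) ℂ) (a : Fin g → ℚ)
    (z : Fin g → ℂ) :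
    theta g τ a 0 z = ∑' n : Fin g → ℤ, thetaTerm τ (fun i => (n i : ℂ) + (a i : ℂ)) z := by
  simp [theta, thetaTerm]

theorem hasSum_theta_mul_theta {g : ℕ} {τ τ' : Matrix (Fin g) (Fin g) ℂ}
    (hτ : (τ.map im).PosDef) (hτ' : (τ'.map im).PosDef) (a a' : Fin g → ℚ) (z z' : Fin g → ℂ) :
    HasSum (fun p : (Fin g → ℤ) × (Fin g → ℤ) =>
        thetaTerm τ (fun i => (p.1 i : ℂ) + (a i : ℂ)) z *
          thetaTerm τ' (fun i => (p.2 i : ℂ) + (a' i : ℂ)) z')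
      (theta g τ a 0 z * theta g τ' a' 0 z') := by
  have hS : ∀ {σ : Matrix (Fin g) (Fin g) ℂ}, (σ.map im).PosDef → ∀ (b : Fin g → ℚ) w,
      Summable fun n : Fin g → ℤ => ‖thetaTerm σ (fun i => (n i : ℂ) + (b i : ℂ)) w‖ :=
    fun hσ b w => by simpa using summable_norm_thetaTerm hσ (fun i => (b i : ℝ)) w
  rw [theta_eq_tsum_thetaTerm, theta_eq_tsum_thetaTerm,
    tsum_mul_tsum_of_summable_norm (hS hτ a z) (hS hτ' a' z')]
  exact (summable_mul_of_summable_norm (hS hτ a z) (hS hτ' a' z')).hasSum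

theorem riemann_theta_relation_general (g : ℕ)
    (τ : Matrix (Fin g) (Fin g) ℂ)
    (hpos : (τ.map Complex.im).PosDef)
    (z1 z2 : Fin g → ℂ) :
    theta g τ 0 0 (z1 + z2) * theta g τ 0 0 (z1 - z2) =
      ∑ ε : Fin g → Bool,
        theta g (2 • τ) (fun i => if ε i then (1/2 : ℚ) else 0) 0 (fun i => 2 * z1 i) *
          theta g (2 • τ) (fun i => if ε i then (1/2 : ℚ) else 0) 0 (fun i => 2 * z2 i) := by
  have hpos₂ : ((2 • τ).map im).PosDef := by
    convert hpos.smul (two_pos : (0 : ℝ) < 2) using 1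
    ext i j
    simp [two_smul, two_mul]
  have hprod := (parityEquiv (Fin g)).hasSum_iff.mpr
    (hasSum_theta_mul_theta hpos hpos 0 0 (z1 + z2) (z1 - z2))
  refine (hprod.prod_fiberwise fun ε => ?_).unique (hasSum_fintype _)
  simpa only [Function.comp_apply, thetaTerm_parityEquiv] using
    hasSum_theta_mul_theta hpos₂ hpos₂ _ _ (fun i => 2 * z1 i) (fun i => 2 * z2 i)

/-- The Riemann theta relation:
`θ[0,0](z1+z2, τ)·θ[0,0](z1−z2, τ) = Σ_{a ∈ {0,1/2}^g} θ[a,0](2z1, 2τ)·θ[a,0](2z2, 2τ)`,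
where the sum runs over all `2^g` vectors `a` with entries in `{0, 1/2}`
(indexed here by functions `ε : Fin g → Bool`). -/
theorem riemann_theta_relation (g : ℕ) (hg : 1 ≤ g)
    (τ : Matrix (Fin g) (Fin g) ℂ) (hsymm : τ.IsSymm)
    (hpos : (τ.map Complex.im).PosDef)
    (z1 z2 : Fin g → ℂ) :
    theta g τ 0 0 (z1 + z2) * theta g τ 0 0 (z1 - z2) =
      ∑ ε : Fin g → Bool,
        theta g (2 • τ) (fun i => if ε i then (1/2 : ℚ) else 0) 0 (fun i => 2 * z1 i) *
          theta g (2 • τ) (fun i => if ε i then (1/2 : ℚ) else 0) 0 (fun i => 2 * z2 i) :=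
  riemann_theta_relation_general g τ hpos z1 z2
end

section
/- Let k be a field of characteristic ≠ 2 and let λ1', λ2', λ3' ∈ k satisfy λ2' ≠ λ3', λ1' ≠ λ2', λ1' ≠ λ3', λ1' ≠ 2 and λ1' ≠ −2. Define Λ1' = 2(2λ1' − λ2' − λ3')/(λ2' − λ3'), Λ2' = Λ1' − 4(λ1' − λ2')(λ1' − λ3')/((λ1' + 2)(λ2' − λ3')), and Λ3' = Λ1' − 4(λ1' − λ2')(λ1' − λ3')/((λ1' − 2)(λ2' − λ3')). Then Λ2' ≠ Λ3', Λ1' ≠ 2, Λ1' ≠ −2, and the inverse relations hold: λ1' = 2(2Λ1' − Λ2' − Λ3')/(Λ2' − Λ3'), λ2' − λ1' = −4(Λ1' − Λ2')(Λ1' − Λ3')/((Λ1' + 2)(Λ2' − Λ3')), and λ3' − λ1' = −4(Λ1' − Λ2')(Λ1' − Λ3')/((Λ1' − 2)(Λ2' − Λ3')). -/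
/-!
Write `a = λ1' - λ2'`, `b = λ1' - λ3'`, `d = λ2' - λ3'`. Every difference among `Λ1', Λ2', Λ3', ±2`
that enters the inverse relations is a monomial in `a, b, d, λ1' + 2, λ1' - 2`:
`Λ1' - 2 = 4a/d`, `Λ1' + 2 = 4b/d`, `Λ1' - Λ2' = 4ab/((λ1' + 2)d)`, `Λ1' - Λ3' = 4ab/((λ1' - 2)d)`
and `Λ2' - Λ3' = 16ab/(d(λ1' + 2)(λ1' - 2))`. The non-degeneracy of the `Λ'` is read off from
these, and the inverse relations become identities of rational monomials.
-/

namespace Richelot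

variable {k : Type*} [Field k] {l1 l2 l3 L1 L2 L3 : k}

lemma dual₁_sub_two (h23 : l2 ≠ l3) (hL1 : L1 = 2 * (2*l1 - l2 - l3) / (l2 - l3)) :
    L1 - 2 = 4 * (l1 - l2) / (l2 - l3) := by
  have hd : l2 - l3 ≠ 0 := sub_ne_zero.mpr h23
  subst hL1
  field_simp
  ring

lemma dual₁_add_two (h23 : l2 ≠ l3) (hL1 : L1 = 2 * (2*l1 - l2 - l3) / (l2 - l3)) :
    L1 + 2 = 4 * (l1 - l3) / (l2 - l3) := by
  have hd : l2 - l3 ≠ 0 := sub_ne_zero.mpr h23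
  subst hL1
  field_simp
  ring

lemma dual₂_sub_dual₃ (h23 : l2 ≠ l3) (hp : l1 ≠ 2) (hm : l1 ≠ -2)
    (hL2 : L2 = L1 - 4 * (l1 - l2) * (l1 - l3) / ((l1 + 2) * (l2 - l3)))
    (hL3 : L3 = L1 - 4 * (l1 - l2) * (l1 - l3) / ((l1 - 2) * (l2 - l3))) :
    L2 - L3 = 16 * (l1 - l2) * (l1 - l3) / ((l2 - l3) * (l1 + 2) * (l1 - 2)) := by
  have hd : l2 - l3 ≠ 0 := sub_ne_zero.mpr h23
  have hp' : l1 - 2 ≠ 0 := sub_ne_zero.mpr hp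
  have hm' : l1 + 2 ≠ 0 := by rwa [← sub_neg_eq_add, sub_ne_zero]
  rw [hL2, hL3]
  field_simp
  ring

end Richelot

open Richelot in
/-- Symmetric relations between the rescaled Rosenhain moduli `λ1', λ2', λ3'` of a
genus-two curve and the rescaled moduli `Λ1', Λ2', Λ3'` of its (2,2)-isogenous curve
(Richelot isogeny), as a purely algebraic identity over a field of characteristic ≠ 2. -/
theorem richelot_moduli_relations {k : Type*} [Field k] (hchar : (2 : k) ≠ 0)
    (l1 l2 l3 : k)
    (h23 : l2 ≠ l3) (h12 : l1 ≠ l2) (h13 : l1 ≠ l3)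
    (hp : l1 ≠ 2) (hm : l1 ≠ -2)
    (L1 L2 L3 : k)
    (hL1 : L1 = 2 * (2*l1 - l2 - l3) / (l2 - l3))
    (hL2 : L2 = L1 - 4 * (l1 - l2) * (l1 - l3) / ((l1 + 2) * (l2 - l3)))
    (hL3 : L3 = L1 - 4 * (l1 - l2) * (l1 - l3) / ((l1 - 2) * (l2 - l3))) :
    L2 ≠ L3 ∧ L1 ≠ 2 ∧ L1 ≠ -2 ∧
    l1 = 2 * (2*L1 - L2 - L3) / (L2 - L3) ∧
    l2 - l1 = -(4 * (L1 - L2) * (L1 - L3)) / ((L1 + 2) * (L2 - L3)) ∧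
    l3 - l1 = -(4 * (L1 - L2) * (L1 - L3)) / ((L1 - 2) * (L2 - L3)) := by
  have h4 : (4 : k) ≠ 0 := by simpa [← two_add_two_eq_four, ← two_mul] using mul_ne_zero hchar hchar
  have h16 : (16 : k) ≠ 0 := by simpa [show (16 : k) = 4 * 4 by norm_num] using mul_ne_zero h4 h4
  have hd : l2 - l3 ≠ 0 := sub_ne_zero.mpr h23
  have ha : l1 - l2 ≠ 0 := sub_ne_zero.mpr h12
  have hb : l1 - l3 ≠ 0 := sub_ne_zero.mpr h13
  have hp' : l1 - 2 ≠ 0 := sub_ne_zero.mpr hp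
  have hm' : l1 + 2 ≠ 0 := by rwa [← sub_neg_eq_add, sub_ne_zero]
  have e1m := dual₁_sub_two h23 hL1
  have e1p := dual₁_add_two h23 hL1
  have e12 : L1 - L2 = 4 * (l1 - l2) * (l1 - l3) / ((l1 + 2) * (l2 - l3)) := by rw [hL2]; ring
  have e13 : L1 - L3 = 4 * (l1 - l2) * (l1 - l3) / ((l1 - 2) * (l2 - l3)) := by rw [hL3]; ring
  have e23 := dual₂_sub_dual₃ h23 hp hm hL2 hL3
  have n1m : L1 - 2 ≠ 0 := by rw [e1m]; positivity
  have n1p : L1 + 2 ≠ 0 := by rw [e1p]; positivity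
  have n23 : L2 - L3 ≠ 0 := by rw [e23]; positivity
  refine ⟨sub_ne_zero.mp n23, sub_ne_zero.mp n1m, by rwa [← sub_neg_eq_add, sub_ne_zero] at n1p,
    ?_, ?_, ?_⟩
  · rw [show 2 * L1 - L2 - L3 = (L1 - L2) + (L1 - L3) by ring, e12, e13, e23]
    field_simp
    ring
  · rw [e12, e13, e1p, e23]
    field_simp
    ring
  · rw [e12, e13, e1m, e23]
    field_simp
    ring
end

section
/- Let k be a field and λ1, λ2, λ3 ∈ k. Suppose t1, t2, t3, t4, t5, t6 ∈ k satisfy the three quadric equations t1² = (1−λ1)t4² + λ1·t5² + λ1(λ1−1)t6², t2² = (1−λ2)t4² + λ2·t5² + λ2(λ2−1)t6², t3² = (1−λ3)t4² + λ3·t5² + λ3(λ3−1)t6². Set z1 = t6², z2 = t4² + t6² − t5², z3 = t4², and z̃4 = t1·t2·t3·t4·t5·t6. Then z̃4² = z1·z3·(z1 − z2 + z3)·∏_{i=1}^{3} (λi²·z1 − λi·z2 + z3); that is, the point (z1, z2, z3, z̃4) lies on the Shioda sextic associated with the genus-two curve y² = xz(x−z)(x−λ1 z)(x−λ2 z)(x−λ3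 z). -/
/-!
Under `z1 = t6²`, `z2 = t4² + t6² − t5²`, `z3 = t4²`, the linear form `λ²z1 − λz2 + z3` becomes the
quadric `(1 − λ)t4² + λt5² + λ(λ − 1)t6²` of the Kummer equations. For `λ = λi` this is `ti²`, and
`z1 − z2 + z3 = t5²`, so the right-hand side of the sextic is the square `(t6 t4 t5 t1 t2 t3)²`.
-/

theorem shioda_linear_form_of_squares {R : Type*} [CommRing R] (lam a b c : R) :
    lam^2 * c^2 - lam * (a^2 + c^2 - b^2) + a^2 =
      (1 - lam) * a^2 + lam * b^2 + lam * (lam - 1) * c^2 := by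
  ring

/-- A point on the complete intersection of the three Kummer quadrics in `P⁵`
maps to a point of the Shioda sextic associated with the genus-two curve
`y² = xz(x−z)(x−lam1 z)(x−lam2 z)(x−lam3 z)`. -/
theorem kummer_quadrics_to_shioda_sextic {k : Type*} [Field k]
    (lam1 lam2 lam3 : k) (t1 t2 t3 t4 t5 t6 : k)
    (hq1 : t1^2 = (1 - lam1) * t4^2 + lam1 * t5^2 + lam1 * (lam1 - 1) * t6^2)
    (hq2 : t2^2 = (1 - lam2) * t4^2 + lam2 * t5^2 + lam2 * (lam2 - 1) * t6^2)
    (hq3 : t3^2 = (1 - lam3) * t4^2 + lam3 * t5^2 + lam3 * (lam3 - 1) * t6^2)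
    (z1 z2 z3 z4 : k)
    (hz1 : z1 = t6^2) (hz2 : z2 = t4^2 + t6^2 - t5^2) (hz3 : z3 = t4^2)
    (hz4 : z4 = t1 * t2 * t3 * t4 * t5 * t6) :
    z4^2 = z1 * z3 * (z1 - z2 + z3) *
      ((lam1^2 * z1 - lam1 * z2 + z3) * (lam2^2 * z1 - lam2 * z2 + z3) *
        (lam3^2 * z1 - lam3 * z2 + z3)) := by
  subst hz1 hz2 hz3 hz4
  have hmiddle : t6^2 - (t4^2 + t6^2 - t5^2) + t4^2 = t5^2 := by ring
  rw [hmiddle, shioda_linear_form_of_squares lam1, shioda_linear_form_of_squares lam2,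
    shioda_linear_form_of_squares lam3, ← hq1, ← hq2, ← hq3]
  ring
end

section
/- Let k be a field with char k ≠ 2 and let s1, s2 ∈ k be such that D := 4(s1³ + s2³) − s1²s2² − 18·s1·s2 + 27 ≠ 0. Then the Weierstrass curve E1 : y² = x³ + s2·x² + s1·x + 1 has nonzero discriminant and its j-invariant equals 256·(3s1 − s2²)³ / D, and the Weierstrass curve E2 : y² = x³ + s1·x² + s2·x + 1 has nonzero discriminant and its j-invariant equals 256·(3s2 − s1²)³ / D. -/
/-!
Both quotients have the form `y² = x³ + a₂x² + a₄x + 1`. For a curve `y² = f(x)` the Weierstrass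
discriminant is `16 · disc f`, and for `f = x³ + b x² + a x + 1` one has `disc f = -D(a, b)`;
moreover `c₄ = -16 (3a - b²)`, so `c₄³ / Δ = 256 (3a - b²)³ / D(a, b)`. The two quotients are
exchanged by `s1 ↔ s2`, under which `D` is symmetric.
-/

namespace WeierstrassCurve

theorem Δ_eq_sixteen_mul_discr_of_isCharNeTwoNF {R : Type*} [CommRing R] (W : WeierstrassCurve R)
    [W.IsCharNeTwoNF] : W.Δ = 16 * (⟨1, W.a₂, W.a₄, W.a₆⟩ : Cubic R).discr := by
  rw [Δ_of_isCharNeTwoNF, Cubic.discr]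
  ring

theorem c₄_pow_three_div_Δ_of_isCharNeTwoNF {F : Type*} [Field F] (W : WeierstrassCurve F)
    [W.IsCharNeTwoNF] :
    W.c₄ ^ 3 / W.Δ = 256 * (W.a₂ ^ 2 - 3 * W.a₄) ^ 3 / (⟨1, W.a₂, W.a₄, W.a₆⟩ : Cubic F).discr := by
  rw [Δ_eq_sixteen_mul_discr_of_isCharNeTwoNF,
    show W.c₄ ^ 3 = 16 * (256 * (W.a₂ ^ 2 - 3 * W.a₄) ^ 3) by rw [c₄_of_isCharNeTwoNF]; ring]
  -- in characteristic 2 both sides vanish, the left one as `_ / 0`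
  rcases eq_or_ne (16 : F) 0 with h16 | h16
  · rw [show (256 : F) = 16 * 16 by norm_num, h16]
    simp
  · exact mul_div_mul_left _ _ h16

end WeierstrassCurve

open WeierstrassCurve

section Bolza

variable {F : Type*} [Field F]

def bolzaQuotient (a b : F) : WeierstrassCurve F :=
  { a₁ := 0, a₂ := b, a₃ := 0, a₄ := a, a₆ := 1 }

def bolzaDiscr (a b : F) : F :=
  4 * (a ^ 3 + b ^ 3) - a ^ 2 * b ^ 2 - 18 * a * b + 27

theorem bolzaDiscr_comm (a b : F) : bolzaDiscr a b = bolzaDiscr b a := by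
  unfold bolzaDiscr
  ring

instance (a b : F) : (bolzaQuotient a b).IsCharNeTwoNF := ⟨rfl, rfl⟩

theorem discr_cubic_eq_neg_bolzaDiscr (a b : F) :
    (⟨1, b, a, 1⟩ : Cubic F).discr = -bolzaDiscr a b := by
  rw [Cubic.discr, bolzaDiscr]
  ring

theorem bolzaQuotient_Δ (a b : F) : (bolzaQuotient a b).Δ = -16 * bolzaDiscr a b := by
  rw [Δ_eq_sixteen_mul_discr_of_isCharNeTwoNF]
  change 16 * (⟨1, b, a, 1⟩ : Cubic F).discr = _
  rw [discr_cubic_eq_neg_bolzaDiscr]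
  ring

theorem bolzaQuotient_Δ_ne_zero (h2 : (2 : F) ≠ 0) {a b : F} (hD : bolzaDiscr a b ≠ 0) :
    (bolzaQuotient a b).Δ ≠ 0 := by
  rw [bolzaQuotient_Δ]
  have h16 : (-16 : F) ≠ 0 := by
    simpa [show (16 : F) = 2 ^ 4 by norm_num] using h2
  exact mul_ne_zero h16 hD

theorem bolzaQuotient_c₄_pow_three_div_Δ (a b : F) :
    (bolzaQuotient a b).c₄ ^ 3 / (bolzaQuotient a b).Δ =
      256 * (3 * a - b ^ 2) ^ 3 / bolzaDiscr a b := by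
  rw [c₄_pow_three_div_Δ_of_isCharNeTwoNF]
  change 256 * (b ^ 2 - 3 * a) ^ 3 / (⟨1, b, a, 1⟩ : Cubic F).discr = _
  rw [discr_cubic_eq_neg_bolzaDiscr, ← neg_div_neg_eq, neg_neg]
  congr 1
  ring

end Bolza

/-- Bolza's two elliptic quotients: the curves `E1 : y² = x³ + s2x² + s1x + 1` and
`E2 : y² = x³ + s1x² + s2x + 1` have nonzero discriminants and j-invariants
`256(3s1 − s2²)³/D` and `256(3s2 − s1²)³/D` with
`D = 4(s1³+s2³) − s1²s2² − 18s1s2 + 27`, where the j-invariant of a Weierstrass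
curve with nonzero discriminant is `c₄³/Δ`. -/
theorem bolza_elliptic_quotients_j_invariants {k : Type*} [Field k]
    (hchar : (2 : k) ≠ 0) (s1 s2 : k)
    (hD : 4 * (s1^3 + s2^3) - s1^2 * s2^2 - 18 * s1 * s2 + 27 ≠ 0)
    (E1 E2 : WeierstrassCurve k)
    (hE1 : E1 = { a₁ := 0, a₂ := s2, a₃ := 0, a₄ := s1, a₆ := 1 })
    (hE2 : E2 = { a₁ := 0, a₂ := s1, a₃ := 0, a₄ := s2, a₆ := 1 }) :
    E1.Δ ≠ 0 ∧
    E1.c₄^3 / E1.Δ =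
      256 * (3 * s1 - s2^2)^3 / (4 * (s1^3 + s2^3) - s1^2 * s2^2 - 18 * s1 * s2 + 27) ∧
    E2.Δ ≠ 0 ∧
    E2.c₄^3 / E2.Δ =
      256 * (3 * s2 - s1^2)^3 / (4 * (s1^3 + s2^3) - s1^2 * s2^2 - 18 * s1 * s2 + 27) := by
  subst hE1 hE2
  have hD' : bolzaDiscr s2 s1 ≠ 0 := bolzaDiscr_comm s1 s2 ▸ hD
  refine ⟨bolzaQuotient_Δ_ne_zero hchar hD, bolzaQuotient_c₄_pow_three_div_Δ s1 s2,
    bolzaQuotient_Δ_ne_zero hchar hD', (bolzaQuotient_c₄_pow_three_div_Δ s2 s1).trans ?_⟩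
  rw [bolzaDiscr_comm]
  rfl
end

section
/- Let k be a field and Λ ∈ k. (a) If x, y, z ∈ k satisfy y²z = x(x − z)(x − Λz), then X00 = x² − 2Λxz + Λz², X01 = x² − Λz², X10 = x² − 2xz + Λz², X11 = 2yz satisfy the two quadric equations X01² = X10² + X11² and X00² = X10² + (1 − Λ)·X11². (b) Conversely, if X00, X01, X10, X11 ∈ k satisfy X01² = X10² + X11² and X00² = X10² + (1 − Λ)·X11², then x = Λ(X10 − X00), y = Λ(Λ − 1)·X11, z = (1 − Λ)·X01 + Λ·X10 − X00 satisfy y²z = x(x − z)(x − Λz). -/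
/-!
Both forward identities are differences of squares:
`(x² − Λz²)² − (x² − 2xz + Λz²)² = 2z(x − Λz) · 2x(x − z)` and
`(x² − 2Λxz + Λz²)² − (x² − 2xz + Λz²)² = 2(1 − Λ)xz · 2(x − z)(x − Λz)`,
that is, `4z` and `4(1 − Λ)z` times the cubic `x(x − z)(x − Λz) = y²z` of the curve.

For the inverse map, `x`, `x − z` and `x − Λz` are `Λ(X10 − X00)`, `(1 − Λ)(X00 − X01)` and
`Λ(1 − Λ)(X10 − X01)`, so the curve equation reduces to
`X11² z = (X10 − X00)(X00 − X01)(X10 − X01)`. The quadrics express `X11²`, `(1 − Λ)X11²` and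
hence `ΛX11²` as differences of squares of the other coordinates; this turns `X11² z` into the
alternant `X01(X00² − X10²) + X10(X01² − X00²) + X00(X10² − X01²)`, whose factorisation is the
right-hand side.
-/

section

variable {R : Type*} [CommRing R] (Λ : R)

theorem legendre_to_first_quadric {x y z : R} (h : y ^ 2 * z = x * (x - z) * (x - Λ * z)) :
    (x ^ 2 - Λ * z ^ 2) ^ 2 = (x ^ 2 - 2 * x * z + Λ * z ^ 2) ^ 2 + (2 * y * z) ^ 2 := by
  linear_combination (-4 * z) * h

theorem legendre_to_second_quadric {x y z : R} (h : y ^ 2 * z = x * (x - z) * (x - Λ * z)) :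
    (x ^ 2 - 2 * Λ * x * z + Λ * z ^ 2) ^ 2 =
      (x ^ 2 - 2 * x * z + Λ * z ^ 2) ^ 2 + (1 - Λ) * (2 * y * z) ^ 2 := by
  linear_combination (4 * (Λ - 1) * z) * h

theorem sq_mul_eq_prod_sub_of_quadrics {X00 X01 X10 X11 : R}
    (h₁ : X01 ^ 2 = X10 ^ 2 + X11 ^ 2) (h₂ : X00 ^ 2 = X10 ^ 2 + (1 - Λ) * X11 ^ 2) :
    X11 ^ 2 * ((1 - Λ) * X01 + Λ * X10 - X00) = (X10 - X00) * (X00 - X01) * (X10 - X01) := by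
  linear_combination (X00 - X10) * h₁ + (X10 - X01) * h₂

theorem quadrics_to_legendre {X00 X01 X10 X11 : R}
    (h₁ : X01 ^ 2 = X10 ^ 2 + X11 ^ 2) (h₂ : X00 ^ 2 = X10 ^ 2 + (1 - Λ) * X11 ^ 2) :
    (Λ * (Λ - 1) * X11) ^ 2 * ((1 - Λ) * X01 + Λ * X10 - X00) =
      (Λ * (X10 - X00)) *
        (Λ * (X10 - X00) - ((1 - Λ) * X01 + Λ * X10 - X00)) *
        (Λ * (X10 - X00) - Λ * ((1 - Λ) * X01 + Λ * X10 - X00)) := by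
  linear_combination (Λ * (Λ - 1)) ^ 2 * sq_mul_eq_prod_sub_of_quadrics Λ h₁ h₂

end

/-- The Legendre elliptic curve `y²z = x(x−z)(x−Λz)` is equivalent to the complete
intersection of the two quadrics `X01² = X10² + X11²` and
`X00² = X10² + (1−Λ)X11²`, via the displayed mutually inverse rational maps. -/
theorem legendre_curve_quadric_intersection {k : Type*} [Field k] (Λ : k) :
    -- (a) forward map: from the Legendre curve to the intersection of quadrics
    (∀ x y z : k, y^2 * z = x * (x - z) * (x - Λ * z) →
      (x^2 - Λ * z^2)^2 = (x^2 - 2*x*z + Λ * z^2)^2 + (2*y*z)^2 ∧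
      (x^2 - 2*Λ*x*z + Λ * z^2)^2 = (x^2 - 2*x*z + Λ * z^2)^2 + (1 - Λ) * (2*y*z)^2) ∧
    -- (b) inverse map: from the intersection of quadrics to the Legendre curve
    (∀ X00 X01 X10 X11 : k,
      X01^2 = X10^2 + X11^2 → X00^2 = X10^2 + (1 - Λ) * X11^2 →
      (Λ * (Λ - 1) * X11)^2 * ((1 - Λ) * X01 + Λ * X10 - X00) =
        (Λ * (X10 - X00)) *
          (Λ * (X10 - X00) - ((1 - Λ) * X01 + Λ * X10 - X00)) *
          (Λ * (X10 - X00) - Λ * ((1 - Λ) * X01 + Λ * X10 - X00))) :=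
  ⟨fun _ _ _ h => ⟨legendre_to_first_quadric Λ h, legendre_to_second_quadric Λ h⟩,
    fun _ _ _ _ h₁ h₂ => quadrics_to_legendre Λ h₁ h₂⟩
end
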